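/- The $9 \times 9$ matrix $P_{CHSH}$ with $P_{00} = 1$, $P_{0i} = P_{i0} = P_{ii} = \chi$ for $i = 1, \ldots, 8$ where $\chi = (2+\sqrt{2})/8$, $P_{ij} = 0$ when $(i - j) \bmod 8 \in \{1, 7, 4\}$ (indices $1..8$ cyclic), $P_{ij} = \chi/2$ when $(i-j) \bmod 8 \in \{2, 6\}$, and $P_{ij} = (1+\sqrt{2})/8$ when $(i-j) \bmod 8 \in \{3, 5\}$, is positive semidefinite and satisfies $\sum_{i=1}^8 P_{ii} = 2 + \sqrt{2}$. -/

import Mathlib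

/-!
Since the top-left entry is `1`, `P_CHSH` is positive semidefinite iff its Schur complement
`C - χ² J` is, where `C` is the circulant trailing block and `J` the all-ones matrix. On the
characters `k ↦ ω^{jk}` of `ℤ/8` (`ω = e^{2πi/8}`), `C` has eigenvalue
`χ + χ cos(πk/2) + 2ξ cos(3πk/4)`, which is `8χ²` for `k = 0` (cancelled by `χ² J`), `0` for
`k = ±1, ±2`, `1/4` for `k = 4` and `(2+√2)/4` for `k = ±3`. Hence the Schur complement is an
explicit nonnegative combination of rank-one projections onto real characters.
-/

/-- The primal-optimal CHSH matrix `P_CHSH`, with `χ = (2+√2)/8` and `ξ = (1+√2)/8`. -/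
noncomputable def Pchsh : Matrix (Fin 1 ⊕ ZMod 8) (Fin 1 ⊕ ZMod 8) ℝ :=
  Matrix.fromBlocks
    (fun _ _ => 1)
    (fun _ _ => (2 + Real.sqrt 2) / 8)
    (fun _ _ => (2 + Real.sqrt 2) / 8)
    (fun i j =>
      if i = j then (2 + Real.sqrt 2) / 8
      else if i - j = 1 ∨ i - j = -1 ∨ i - j = 4 then 0
      else if i - j = 2 ∨ i - j = -2 then ((2 + Real.sqrt 2) / 8) / 2
      else (1 + Real.sqrt 2) / 8)

open Matrix Real

theorem Matrix.posSemidef_vecMulVec_self {n R : Type*} [Finite n] [CommRing R] [PartialOrder R]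
    [StarRing R] [StarOrderedRing R] [TrivialStar R] (v : n → R) :
    (vecMulVec v v).PosSemidef := by
  simpa using posSemidef_vecMulVec_self_star v

/-- Unlike `fin_cases`, this produces `ZMod 8` numerals, on which `decide` can evaluate the
conditions in the definition of `Pchsh`. -/
theorem ZMod.eight_cases (i : ZMod 8) :
    i = 0 ∨ i = 1 ∨ i = 2 ∨ i = 3 ∨ i = 4 ∨ i = 5 ∨ i = 6 ∨ i = 7 := by
  revert i
  decide

noncomputable def chshAlt : ZMod 8 → ℝ := ![1, -1, 1, -1, 1, -1, 1, -1]

/-- `chshCos j = cos (3πj/4)`. -/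
noncomputable def chshCos : ZMod 8 → ℝ := ![1, -(√2 / 2), 0, √2 / 2, -1, √2 / 2, 0, -(√2 / 2)]

/-- `chshSin j = sin (3πj/4)`. -/
noncomputable def chshSin : ZMod 8 → ℝ := ![0, √2 / 2, -1, √2 / 2, 0, -(√2 / 2), 1, -(√2 / 2)]

theorem Pchsh_inl_inr (a : Fin 1) (j : ZMod 8) : Pchsh (.inl a) (.inr j) = (2 + √2) / 8 := rfl

theorem Pchsh_inr_self (i : ZMod 8) : Pchsh (.inr i) (.inr i) = (2 + √2) / 8 := if_pos rfl

theorem Pchsh_inr_inr_sub_sq (i j : ZMod 8) :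
    Pchsh (.inr i) (.inr j) - ((2 + √2) / 8) ^ 2 =
      1 / 32 * (chshAlt i * chshAlt j) +
        (2 + √2) / 16 * (chshCos i * chshCos j + chshSin i * chshSin j) := by
  have sqrt_two_cube : √2 ^ 3 = 2 * √2 := by rw [pow_succ, sq_sqrt zero_le_two]
  change (if i = j then _ else _) - _ = _
  rcases ZMod.eight_cases i with rfl | rfl | rfl | rfl | rfl | rfl | rfl | rfl <;>
  rcases ZMod.eight_cases j with rfl | rfl | rfl | rfl | rfl | rfl | rfl | rfl <;>
  simp +decide only [↓reduceIte] <;> simp [chshAlt, chshCos, chshSin] <;> ring_nf <;> simp [sqrt_two_cube] <;>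
    ring

theorem Pchsh_toBlocks₁₁ : Pchsh.toBlocks₁₁ = 1 := by
  ext i j
  simp [Pchsh, fromBlocks, toBlocks₁₁, Subsingleton.elim i j, one_apply]

theorem Pchsh_toBlocks₂₁ : Pchsh.toBlocks₂₁ = Pchsh.toBlocks₁₂ᴴ := rfl

theorem Pchsh_schurComplement :
    Pchsh.toBlocks₂₂ - Pchsh.toBlocks₁₂ᴴ * Pchsh.toBlocks₁₂ =
      (1 / 32 : ℝ) • vecMulVec chshAlt chshAlt +
        ((2 + √2) / 16) • (vecMulVec chshCos chshCos + vecMulVec chshSin chshSin) := by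
  ext i j
  simp [toBlocks₂₂, toBlocks₁₂, mul_apply, vecMulVec, Pchsh_inl_inr]
  linear_combination Pchsh_inr_inr_sub_sq i j

theorem Pchsh_posSemidef : Pchsh.PosSemidef := by
  let _ : Invertible (1 : Matrix (Fin 1) (Fin 1) ℝ) := invertibleOne
  rw [← fromBlocks_toBlocks Pchsh, Pchsh_toBlocks₁₁, Pchsh_toBlocks₂₁,
    PosDef.fromBlocks₁₁ _ _ PosDef.one, inv_one, Matrix.mul_one, Pchsh_schurComplement]
  exact ((posSemidef_vecMulVec_self _).smul (by norm_num)).add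
    (((posSemidef_vecMulVec_self _).add (posSemidef_vecMulVec_self _)).smul (by positivity))

/-- `P_CHSH` is positive semidefinite and its last eight diagonal entries sum to `2 + √2`. -/
theorem Pchsh_posSemidef_and_value :
    Pchsh.PosSemidef ∧ ∑ i : ZMod 8, Pchsh (Sum.inr i) (Sum.inr i) = 2 + Real.sqrt 2 := by
  refine ⟨Pchsh_posSemidef, ?_⟩
  simp only [Pchsh_inr_self, Finset.sum_const, Finset.card_univ, ZMod.card, nsmul_eq_mul]
  ring
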